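/- For every α ≥ 0 there is a constant C = C(α) ≥ 0 such that for every polynomial f(z) = Σ_{k=0}^{N} a_k z^k one has Σ_{k=0}^{N} |a_k| (1+k)^α ≤ C · Σ_{n=0}^{∞} 2^{(α + 1/2)n} sup_{|z|<1} |Σ_k φ_n(k) a_k z^k|; that is, the analytic Besov space B^{α+1/2}_{∞,1}(𝔻) embeds continuously into the weighted Wiener algebra A_α(𝔻). -/

import Mathlib

/-!
Cut `f` into the dyadic blocks `f_n = ∑ φ_n(k) a_k z^k`; they add up to `f` because the `φ_n`
form a partition of unity. The block `f_n` only involves frequencies `k < 2^(n+2)`, so its weight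
`(1+k)^α` is at most `2^((n+2)α)`, and by Cauchy–Schwarz and Parseval on the unit circle its
coefficients have `ℓ¹` norm at most `2^((n+2)/2) sup_𝔻 |f_n|`. Summing over `n` gives the bound
with `C = 2^(2α+1)`.
-/

open MeasureTheory

/-- The dyadic partition of unity `(φ_n)_{n ≥ 0}` on `ℤ₊`. -/
noncomputable def dyadicPhi (n k : ℕ) : ℝ :=
  if n = 0 then (if k ≤ 1 then 1 else 0)
  else if k ≤ 2 ^ (n - 1) then 0
  else if k ≤ 2 ^ n then ((k : ℝ) - 2 ^ (n - 1)) / 2 ^ (n - 1)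
  else if k ≤ 2 ^ (n + 1) then ((2 : ℝ) ^ (n + 1) - (k : ℝ)) / 2 ^ n
  else 0

open Finset

theorem dyadicPhi_nonneg (n k : ℕ) : 0 ≤ dyadicPhi n k := by
  unfold dyadicPhi
  split_ifs with _ _ h₂ _ h₄ <;> try norm_num
  · have : ((2 ^ (n - 1) : ℕ) : ℝ) ≤ k := by exact_mod_cast (not_le.mp h₂).le
    push_cast at this
    exact div_nonneg (by linarith) (by positivity)
  · have : (k : ℝ) ≤ ((2 ^ (n + 1) : ℕ) : ℝ) := by exact_mod_cast h₄
    push_cast at this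
    exact div_nonneg (by linarith) (by positivity)

theorem dyadicPhi_eq_zero_of_le {n k : ℕ} (hn : n ≠ 0) (hk : k ≤ 2 ^ (n - 1)) :
    dyadicPhi n k = 0 := by
  simp [dyadicPhi, hn, hk]

theorem dyadicPhi_eq_zero_of_lt {n k : ℕ} (hk : 2 ^ (n + 1) < k) : dyadicPhi n k = 0 := by
  have : 2 ^ n < 2 ^ (n + 1) := Nat.pow_lt_pow_right one_lt_two n.lt_succ_self
  have : 1 ≤ 2 ^ n := Nat.one_le_two_pow
  unfold dyadicPhi
  split_ifs <;> first | rfl | omega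

theorem dyadicPhi_add_dyadicPhi_succ {n k : ℕ} (h₁ : 2 ^ n < k) (h₂ : k ≤ 2 ^ (n + 1)) :
    dyadicPhi n k + dyadicPhi (n + 1) k = 1 := by
  have hk : (2 : ℝ) ^ n < k := by exact_mod_cast h₁
  rcases n with _ | n
  · obtain rfl : k = 2 := by omega
    norm_num [dyadicPhi]
  · have : 2 ^ n < 2 ^ (n + 1) := Nat.pow_lt_pow_right one_lt_two n.lt_succ_self
    simp only [dyadicPhi, Nat.add_one_sub_one, if_neg (Nat.succ_ne_zero _), if_neg (not_le.mpr h₁),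
      if_pos h₂, if_neg (show ¬k ≤ 2 ^ n by omega), if_neg (show ¬k ≤ 1 by omega)]
    field_simp
    ring

theorem sum_range_dyadicPhi {m k : ℕ} (hk : k ≤ 2 ^ m) :
    ∑ n ∈ range (m + 1), dyadicPhi n k = 1 := by
  induction m with
  | zero => simp [dyadicPhi, show k ≤ 1 by simpa using hk]
  | succ m ih =>
    by_cases hkm : k ≤ 2 ^ m
    · rw [sum_range_succ, ih hkm, dyadicPhi_eq_zero_of_le m.succ_ne_zero hkm, add_zero]
    · have hlow : ∀ n ∈ range m, dyadicPhi n k = 0 := fun n hn =>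
        dyadicPhi_eq_zero_of_lt <| lt_of_le_of_lt
          (Nat.pow_le_pow_right two_pos (mem_range.mp hn)) (not_le.mp hkm)
      rw [sum_range_succ, sum_range_succ, sum_eq_zero hlow, zero_add,
        dyadicPhi_add_dyadicPhi_succ (not_le.mp hkm) hk]

open Polynomial in
theorem sum_sq_norm_le_sq_of_norm_sum_mul_pow_le {s : Finset ℕ} {c : ℕ → ℂ} {M : ℝ}
    (h : ∀ z : ℂ, ‖z‖ < 1 → ‖∑ k ∈ s, c k * z ^ k‖ ≤ M) :
    ∑ k ∈ s, ‖c k‖ ^ 2 ≤ M ^ 2 := by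
  set p : ℂ[X] := ∑ k ∈ s, monomial k (c k)
  have hp_eval (z : ℂ) : p.eval z = ∑ k ∈ s, c k * z ^ k := by
    simp [p, eval_finsetSum]
  have hp_coeff (i : ℕ) : p.coeff i = if i ∈ s then c i else 0 := by
    simp [p, coeff_monomial]
  have hsupp : p.support ⊆ s := fun i hi => by
    by_contra his
    exact mem_support_iff.mp hi (by simp [hp_coeff, his])
  -- The bound passes from the open disc to its closure, where Parseval is available.
  have hclosed : ∀ z ∈ Metric.closedBall (0 : ℂ) 1, ‖p.eval z‖ ≤ M := by
    rw [← closure_ball (0 : ℂ) one_ne_zero]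
    refine closure_minimal (t := {z | ‖p.eval z‖ ≤ M}) (fun z hz => ?_)
      (isClosed_le p.continuous.norm continuous_const)
    simpa [hp_eval] using h z (mem_ball_zero_iff.mp hz)
  calc ∑ k ∈ s, ‖c k‖ ^ 2 = ∑ i ∈ s, ‖p.coeff i‖ ^ 2 :=
        sum_congr rfl fun i hi => by rw [hp_coeff, if_pos hi]
    _ = ∑ i ∈ p.support, ‖p.coeff i‖ ^ 2 :=
        (sum_subset hsupp fun i _ hi => by simp [notMem_support_iff.mp hi]).symm
    _ = Real.circleAverage (fun z ↦ ‖p.eval z‖ ^ 2) 0 1 := p.sum_sq_norm_coeff_eq_circleAverage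
    _ ≤ M ^ 2 := by
        refine Real.circleAverage_mono_on_of_le_circle
          ((p.continuous.norm.pow 2).continuousOn.circleIntegrable zero_le_one) fun z hz => ?_
        exact pow_le_pow_left₀ (norm_nonneg _)
          (hclosed z (Metric.sphere_subset_closedBall (by simpa using hz))) 2

theorem sum_norm_le_sqrt_card_mul_of_norm_sum_mul_pow_le {s t : Finset ℕ} {c : ℕ → ℂ} {M : ℝ}
    (hc : ∀ k ∈ s, k ∉ t → c k = 0)
    (h : ∀ z : ℂ, ‖z‖ < 1 → ‖∑ k ∈ s, c k * z ^ k‖ ≤ M) :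
    ∑ k ∈ s, ‖c k‖ ≤ √(t.card : ℝ) * M := by
  have hM : 0 ≤ M := (norm_nonneg _).trans (h 0 (by simp))
  have hrestrict {β : Type} [AddCommMonoid β] (f : ℕ → ℂ → β) (hf : ∀ k, f k 0 = 0) :
      ∑ k ∈ s ∩ t, f k (c k) = ∑ k ∈ s, f k (c k) :=
    sum_subset inter_subset_left fun k hks hk => by
      rw [hc k hks fun hkt => hk (mem_inter.mpr ⟨hks, hkt⟩), hf]
  have hsq : ∑ k ∈ s ∩ t, ‖c k‖ ^ 2 ≤ M ^ 2 :=
    sum_sq_norm_le_sq_of_norm_sum_mul_pow_le fun z hz => by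
      simpa [hrestrict (fun k a => a * z ^ k)] using h z hz
  rw [← hrestrict (fun _ a => ‖a‖) (fun _ => norm_zero), ← Real.sqrt_sq hM, ← Real.sqrt_mul',
    Real.le_sqrt (by positivity) (by positivity)]
  · calc (∑ k ∈ s ∩ t, ‖c k‖) ^ 2 ≤ (s ∩ t).card * ∑ k ∈ s ∩ t, ‖c k‖ ^ 2 :=
          sq_sum_le_card_mul_sum_sq
      _ ≤ t.card * M ^ 2 := by
          gcongr
          exact inter_subset_right
  · positivity

-- `sSup` of a set unbounded above is `0` in `ℝ`, hence the boundedness hypothesis below.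
noncomputable def diskSup (f : ℂ → ℂ) : ℝ :=
  sSup {r : ℝ | ∃ z : ℂ, ‖z‖ < 1 ∧ r = ‖f z‖}

theorem norm_le_diskSup {f : ℂ → ℂ} {M : ℝ} (hM : ∀ z : ℂ, ‖z‖ < 1 → ‖f z‖ ≤ M) {z : ℂ}
    (hz : ‖z‖ < 1) : ‖f z‖ ≤ diskSup f :=
  le_csSup ⟨M, by rintro _ ⟨w, hw, rfl⟩; exact hM w hw⟩ ⟨z, hz, rfl⟩

theorem diskSup_nonneg (f : ℂ → ℂ) : 0 ≤ diskSup f :=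
  Real.sSup_nonneg <| by rintro _ ⟨z, -, rfl⟩; positivity

theorem diskSup_zero : diskSup 0 = 0 :=
  (Real.sSup_nonpos <| by rintro _ ⟨z, -, rfl⟩; simp).antisymm (diskSup_nonneg 0)

theorem norm_sum_mul_pow_le {s : Finset ℕ} {c : ℕ → ℂ} {z : ℂ} (hz : ‖z‖ ≤ 1) :
    ‖∑ k ∈ s, c k * z ^ k‖ ≤ ∑ k ∈ s, ‖c k‖ :=
  (norm_sum_le _ _).trans <| sum_le_sum fun k _ => by
    rw [norm_mul, norm_pow]
    exact mul_le_of_le_one_right (norm_nonneg _) (pow_le_one₀ (norm_nonneg _) hz)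

theorem norm_le_diskSup_sum_mul_pow {s : Finset ℕ} {c : ℕ → ℂ} {z : ℂ} (hz : ‖z‖ < 1) :
    ‖∑ k ∈ s, c k * z ^ k‖ ≤ diskSup fun w => ∑ k ∈ s, c k * w ^ k :=
  norm_le_diskSup (f := fun w => ∑ k ∈ s, c k * w ^ k) (fun _ hw => norm_sum_mul_pow_le hw.le) hz

noncomputable def dyadicBlock (a : ℕ → ℂ) (N n : ℕ) (z : ℂ) : ℂ :=
  ∑ k ∈ range (N + 1), (dyadicPhi n k : ℂ) * a k * z ^ k

noncomputable def besovNorm (s : ℝ) (N : ℕ) (a : ℕ → ℂ) : ℝ :=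
  ∑' n : ℕ, (2 : ℝ) ^ (s * (n : ℝ)) * diskSup (dyadicBlock a N n)

noncomputable def weightedWienerNorm (α : ℝ) (N : ℕ) (a : ℕ → ℂ) : ℝ :=
  ∑ k ∈ range (N + 1), ‖a k‖ * (1 + (k : ℝ)) ^ α

theorem dyadicPhi_eq_zero_of_lt_of_le {N n k : ℕ} (hn : N < n) (hk : k ≤ N) :
    dyadicPhi n k = 0 :=
  dyadicPhi_eq_zero_of_le (by omega) <| hk.trans <| Nat.lt_two_pow_self.le.trans <|
    Nat.pow_le_pow_right two_pos (by omega)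

theorem dyadicBlock_eq_zero (a : ℕ → ℂ) {N n : ℕ} (hn : N < n) : dyadicBlock a N n = 0 := by
  ext z
  refine sum_eq_zero fun k hk => ?_
  rw [dyadicPhi_eq_zero_of_lt_of_le hn (Nat.lt_succ_iff.mp (mem_range.mp hk))]
  simp

theorem two_pow_rpow_mul_sqrt (α : ℝ) (n : ℕ) :
    ((2 : ℝ) ^ (n + 2)) ^ α * √((2 : ℝ) ^ (n + 2)) =
      2 ^ (2 * α + 1) * 2 ^ ((α + 1 / 2) * (n : ℝ)) := by
  rw [Real.sqrt_eq_rpow, ← Real.rpow_add (by positivity), ← Real.rpow_natCast,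
    ← Real.rpow_mul (by norm_num), ← Real.rpow_add (by norm_num)]
  push_cast
  ring_nf

theorem sum_dyadicPhi_mul_weighted_le {α : ℝ} (hα : 0 ≤ α) (a : ℕ → ℂ) (N n : ℕ) :
    ∑ k ∈ range (N + 1), dyadicPhi n k * (‖a k‖ * (1 + (k : ℝ)) ^ α) ≤
      2 ^ (2 * α + 1) * ((2 : ℝ) ^ ((α + 1 / 2) * (n : ℝ)) * diskSup (dyadicBlock a N n)) := by
  set c : ℕ → ℂ := fun k => (dyadicPhi n k : ℂ) * a k
  have hc_norm (k : ℕ) : ‖c k‖ = dyadicPhi n k * ‖a k‖ := by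
    rw [norm_mul, Complex.norm_real, Real.norm_of_nonneg (dyadicPhi_nonneg n k)]
  have hc_supp : ∀ k ∈ range (N + 1), k ∉ range (2 ^ (n + 2)) → c k = 0 :=
    fun k _ hk => by
      have : 2 ^ (n + 1) < k := by
        rw [mem_range, not_lt, pow_succ] at hk
        have : 0 < 2 ^ (n + 1) := by positivity
        omega
      simp [c, dyadicPhi_eq_zero_of_lt this]
  have hweight (k : ℕ) :
      dyadicPhi n k * (‖a k‖ * (1 + (k : ℝ)) ^ α) ≤ ((2 : ℝ) ^ (n + 2)) ^ α * ‖c k‖ := by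
    rw [hc_norm]
    by_cases hk : 2 ^ (n + 1) < k
    · simp [dyadicPhi_eq_zero_of_lt hk]
    · have : 1 + k ≤ 2 ^ (n + 2) := by
        rw [pow_succ]
        have : 0 < 2 ^ (n + 1) := by positivity
        omega
      calc dyadicPhi n k * (‖a k‖ * (1 + (k : ℝ)) ^ α)
          = (1 + (k : ℝ)) ^ α * (dyadicPhi n k * ‖a k‖) := by ring
        _ ≤ ((2 : ℝ) ^ (n + 2)) ^ α * (dyadicPhi n k * ‖a k‖) := by
          gcongr
          · exact mul_nonneg (dyadicPhi_nonneg n k) (norm_nonneg _)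
          · exact_mod_cast this
  have hℓ1 : ∑ k ∈ range (N + 1), ‖c k‖ ≤
      √((2 : ℝ) ^ (n + 2)) * diskSup (dyadicBlock a N n) := by
    have h := sum_norm_le_sqrt_card_mul_of_norm_sum_mul_pow_le hc_supp
      fun z hz => norm_le_diskSup_sum_mul_pow hz
    rwa [card_range, Nat.cast_pow, Nat.cast_ofNat] at h
  calc ∑ k ∈ range (N + 1), dyadicPhi n k * (‖a k‖ * (1 + (k : ℝ)) ^ α)
      ≤ ((2 : ℝ) ^ (n + 2)) ^ α * ∑ k ∈ range (N + 1), ‖c k‖ := by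
        rw [mul_sum]
        exact sum_le_sum fun k _ => hweight k
    _ ≤ ((2 : ℝ) ^ (n + 2)) ^ α * (√((2 : ℝ) ^ (n + 2)) * diskSup (dyadicBlock a N n)) := by
        gcongr
    _ = _ := by rw [← mul_assoc, two_pow_rpow_mul_sqrt, mul_assoc]

theorem weightedWienerNorm_le_besovNorm {α : ℝ} (hα : 0 ≤ α) (N : ℕ) (a : ℕ → ℂ) :
    weightedWienerNorm α N a ≤ 2 ^ (2 * α + 1) * besovNorm (α + 1 / 2) N a := by
  set F : ℕ → ℝ := fun n => (2 : ℝ) ^ ((α + 1 / 2) * (n : ℝ)) * diskSup (dyadicBlock a N n)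
  have hF : ∀ n ∉ range (N + 1), F n = 0 := fun n hn => by
    simp [F, dyadicBlock_eq_zero a (not_lt.mp (mem_range.not.mp hn)), diskSup_zero]
  calc weightedWienerNorm α N a
      = ∑ k ∈ range (N + 1), (∑ n ∈ range (N + 1), dyadicPhi n k) *
          (‖a k‖ * (1 + (k : ℝ)) ^ α) :=
        sum_congr rfl fun k hk => by
          rw [sum_range_dyadicPhi (Nat.lt_succ_iff.mp (mem_range.mp hk) |>.trans
            Nat.lt_two_pow_self.le), one_mul]
    _ = ∑ n ∈ range (N + 1), ∑ k ∈ range (N + 1),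
          dyadicPhi n k * (‖a k‖ * (1 + (k : ℝ)) ^ α) := by
        simp_rw [sum_mul]
        exact sum_comm
    _ ≤ ∑ n ∈ range (N + 1), 2 ^ (2 * α + 1) * F n :=
        sum_le_sum fun n _ => sum_dyadicPhi_mul_weighted_le hα a N n
    _ = 2 ^ (2 * α + 1) * ∑' n, F n := by
        rw [← mul_sum, tsum_eq_sum hF]

/-- **Embedding of the analytic Besov space into the weighted Wiener
algebra (Remark 5.2).**  For every `α ≥ 0` there is `C ≥ 0` such that for
every polynomial `f(z) = Σ_{k=0}^N a_k z^k`,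
`Σ_k |a_k| (1+k)^α ≤ C ‖f‖_{B^{α+1/2}_{∞,1}(𝔻)}`, i.e.
`B^{α+1/2}_{∞,1}(𝔻) ↪ A_α(𝔻)` continuously. -/
theorem besov_embeds_in_weighted_wiener (α : ℝ) (hα : 0 ≤ α) :
    ∃ C : ℝ, 0 ≤ C ∧
      ∀ (N : ℕ) (a : ℕ → ℂ),
        ∑ k ∈ Finset.range (N + 1), ‖a k‖ * (1 + (k : ℝ)) ^ α ≤
          C * ∑' n : ℕ, (2 : ℝ) ^ ((α + 1 / 2) * (n : ℝ)) *
            sSup {r : ℝ | ∃ z : ℂ, ‖z‖ < 1 ∧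
              r = ‖∑ k ∈ Finset.range (N + 1),
                    (dyadicPhi n k : ℂ) * a k * z ^ k‖} :=
  ⟨2 ^ (2 * α + 1), by positivity, weightedWienerNorm_le_besovNorm hα⟩
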